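/- arXiv:math/9602216 — 7 statements merged into one kernel-verified Lean document; each statement's English description precedes it below -/
import Mathlib

section
/- Let I be a suborder of the linear order J and suppose I is nicely embedded in J. Then for every linear order J₁, the order sum I + J₁ is nicely embedded in the order sum J + J₁ (with respect to the natural inclusion of I + J₁ into J + J₁ induced by I ⊆ J). (Fact (C) in the proof of Criterion 2.6.) -/
open Filter Cardinal

universe u v w u₁

theorem germ_map_lt {S : Type w} (D : Ultrafilter S) {β : Type*} {γ : Type*}
    [Preorder β] [Preorder γ] {m : β → γ} (hm : StrictMono m)
    {x y : Filter.Germ (D : Filter S) β} (h : x < y) : x.map m < y.map m := by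
  induction x using Filter.Germ.inductionOn with
  | _ f =>
  induction y using Filter.Germ.inductionOn with
  | _ g =>
  rw [Filter.Germ.map_coe, Filter.Germ.map_coe]
  rw [Filter.Germ.coe_lt] at h ⊢
  exact h.mono fun s hs => hm hs

theorem germ_map_lt_const {S : Type w} (D : Ultrafilter S) {β : Type*} {γ : Type*}
    [Preorder β] [Preorder γ] {m : β → γ} {c : γ} (hc : ∀ b, m b < c)
    (x : Filter.Germ (D : Filter S) β) : x.map m < (↑c : Filter.Germ (D : Filter S) γ) := by
  induction x using Filter.Germ.inductionOn with
  | _ f =>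
  rw [Filter.Germ.map_coe]
  exact Filter.Germ.coe_lt.mpr (Filter.Eventually.of_forall fun s => hc (f s))

/-- `I` is nicely embedded in `J` (along the inclusion `e : I ↪o J`): there are a nonempty
set `S` and an ultrafilter `D` on `S` together with an order embedding of `J` into the
ultrapower `I^S/D` whose restriction to `I` is the canonical diagonal embedding. -/
def NicelyEmbedded {I : Type u} {J : Type v} [LinearOrder I] [LinearOrder J]
    (e : I ↪o J) : Prop :=
  ∃ (S : Type w) (_ : Nonempty S) (D : Ultrafilter S)
    (g : J ↪o Filter.Germ (D : Filter S) I),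
    ∀ t : I, g (e t) = (↑t : Filter.Germ (D : Filter S) I)

/-- The natural inclusion of `α + γ` into `β + γ` induced by an inclusion `α ↪o β`. -/
noncomputable def sumLexMapLeft {α β γ : Type*} [LinearOrder α] [LinearOrder β]
    [LinearOrder γ] (e : α ↪o β) : (α ⊕ₗ γ) ↪o (β ⊕ₗ γ) :=
  OrderEmbedding.ofStrictMono (fun x => toLex (Sum.map e id (ofLex x)))
    (by
      intro a b h
      cases h with
      | inl h => exact Sum.Lex.inl (e.strictMono h)
      | inr h => exact Sum.Lex.inr h
      | sep => exact Sum.Lex.sep _ _)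

/-- Fact (C) in the proof of Criterion 2.6: if `I` is nicely embedded in `J`, then for
every linear order `J₁` the order sum `I + J₁` is nicely embedded in `J + J₁` (with
respect to the natural inclusion induced by `I ⊆ J`). -/
theorem sumLex_nicelyEmbedded {I : Type u} {J : Type v} [LinearOrder I] [LinearOrder J]
    (e : I ↪o J) (he : NicelyEmbedded.{u, v, w} e)
    (J₁ : Type u₁) [LinearOrder J₁] :
    NicelyEmbedded.{max u u₁, max v u₁, w} (sumLexMapLeft (γ := J₁) e) := by
  obtain ⟨S, hS, D, g, hg⟩ := he
  refine ⟨S, hS, D, ?_, ?_⟩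
  · refine OrderEmbedding.ofStrictMono
      (fun x => Sum.elim
        (fun j => (g j).map (fun i => (toLex (Sum.inl i) : I ⊕ₗ J₁)))
        (fun b => (↑(toLex (Sum.inr b) : I ⊕ₗ J₁) : Filter.Germ (D : Filter S) (I ⊕ₗ J₁)))
        (ofLex x)) ?_
    intro a b h
    cases h with
    | inl h =>
      exact germ_map_lt D (fun i₁ i₂ hi => Sum.Lex.toLex_lt_toLex.2 (Sum.Lex.inl hi))
        (g.strictMono h)
    | inr h =>
      exact Filter.Germ.const_lt (Sum.Lex.toLex_lt_toLex.2 (Sum.Lex.inr h))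
    | sep =>
      exact germ_map_lt_const D
        (fun i => Sum.Lex.toLex_lt_toLex.2 (Sum.Lex.sep _ _)) _
  · intro t
    rcases t with i | b
    · show Filter.Germ.map _ (g (e i)) = _
      rw [hg i, Filter.Germ.map_const]
      rfl
    · rfl
end

section
/- Let δ be an ordinal and let ⟨I_α : α ≤ δ⟩ be an increasing chain of linear orders (each I_α a suborder of I_δ) which is continuous, i.e. for every limit ordinal β ≤ δ, I_β = ⋃_{α<β} I_α. If for every α < δ the order I_α is nicely embedded in I_{α+1}, then for every α ≤ δ the order I_α is nicely embedded in I_δ. (Fact (E) in the proof of Criterion 2.6; the order-theoretic content of Observation 1.11.) -/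
open Filter Cardinal

universe u v w

/-- The inclusion of a subset `A` of a linear order into a subset `B ⊇ A`, as an order
embedding between the induced suborders. -/
def Set.inclEmb {T : Type u} [LinearOrder T] {A B : Set T} (h : A ⊆ B) : A ↪o B :=
  OrderEmbedding.ofStrictMono (Set.inclusion h) (fun _ _ hab => hab)

/-- The suborder `A` of a linear order `T` is nicely embedded in the suborder `B`. -/
def NicelyEmbeddedSet {T : Type u} [LinearOrder T] (A B : Set T) : Prop :=
  ∃ h : A ⊆ B, NicelyEmbedded.{u, u, w} (Set.inclEmb h)

/-!
An ultrapower of an ultrapower is again an ultrapower: if `E` is an ultrafilter on `K` and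
`D k` are ultrafilters on `S k`, then `∏_E (β^{S k}/D k)` embeds into `β^{Σ k, S k}/D'` for the
`E`-sum `D'` of the `D k`, over `β`. Hence nicely embedded is transitive (`K = S₂`, all
`D k = D₁`), and an increasing union of orders in which `A` is nicely embedded contains `A`
nicely (`E` any ultrafilter extending the tail filter, `D k` witnessing the `k`-th embedding).
Induction along the chain, with the continuity at limits, gives the theorem.
-/

universe u₁ u₂ u₃ w₁ w₂

namespace Ultrafilter

variable {K : Type*} {S : K → Type*}

def sigma (E : Ultrafilter K) (D : ∀ k, Ultrafilter (S k)) : Ultrafilter (Σ k, S k) :=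
  E.bind fun k => (D k).map (Sigma.mk k)

theorem eventually_sigma {E : Ultrafilter K} {D : ∀ k, Ultrafilter (S k)}
    {p : (Σ k, S k) → Prop} :
    (∀ᶠ x in (E.sigma D : Filter (Σ k, S k)), p x) ↔
      ∀ᶠ k in (E : Filter K), ∀ᶠ s in (D k : Filter (S k)), p ⟨k, s⟩ :=
  mem_bind'

end Ultrafilter

namespace Filter.Germ

variable {α β : Type*}

noncomputable def out {l : Filter α} (x : Germ l β) : α → β :=
  Quotient.out x

theorem coe_out {l : Filter α} (x : Germ l β) : (x.out : Germ l β) = x :=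
  Quotient.out_eq x

theorem eventually_out_lt_out [Preorder β] {φ : Ultrafilter α} {x y : Germ (φ : Filter α) β}
    (h : x < y) : ∀ᶠ s in (φ : Filter α), x.out s < y.out s := by
  rwa [← coe_out x, ← coe_out y, coe_lt] at h

theorem eventually_out_eq_of_eq_const {l : Filter α} {x : Germ l β} {b : β} (h : x = ↑b) :
    ∀ᶠ s in l, x.out s = b := by
  rw [← coe_out x] at h
  exact coe_eq.mp h

variable {K : Type*} {S : K → Type*} (E : Ultrafilter K) {D : ∀ k, Ultrafilter (S k)}

noncomputable def sigmaFlatten (f : ∀ k, Germ (D k : Filter (S k)) β) :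
    Germ (E.sigma D : Filter (Σ k, S k)) β :=
  ↑(fun x : Σ k, S k => (f x.1).out x.2)

variable {E}

theorem sigmaFlatten_lt_sigmaFlatten [Preorder β] {f g : ∀ k, Germ (D k : Filter (S k)) β}
    (h : ∀ᶠ k in (E : Filter K), f k < g k) : sigmaFlatten E f < sigmaFlatten E g := by
  refine coe_lt.mpr (Ultrafilter.eventually_sigma.mpr ?_)
  filter_upwards [h] with k hk
  exact eventually_out_lt_out hk

theorem sigmaFlatten_eq_const {f : ∀ k, Germ (D k : Filter (S k)) β} {b : β}
    (h : ∀ᶠ k in (E : Filter K), f k = ↑b) : sigmaFlatten E f = ↑b :=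
  coe_eq.mpr <| Ultrafilter.eventually_sigma.mpr <| h.mono fun _ hk =>
    eventually_out_eq_of_eq_const hk

end Filter.Germ

namespace NicelyEmbedded

variable {I : Type u₁} {J : Type u₂} {L : Type u₃} [LinearOrder I] [LinearOrder J]
  [LinearOrder L]

theorem of_ultraproduct {e : I ↪o J} {K : Type w₁} {S : K → Type w₂} [Nonempty K]
    [∀ k, Nonempty (S k)] (E : Ultrafilter K) (D : ∀ k, Ultrafilter (S k))
    (F : J → ∀ k, Germ (D k : Filter (S k)) I)
    (hlt : ∀ a b, a < b → ∀ᶠ k in (E : Filter K), F a k < F b k)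
    (hfix : ∀ t, ∀ᶠ k in (E : Filter K), F (e t) k = ↑t) :
    NicelyEmbedded.{u₁, u₂, max w₁ w₂} e :=
  ⟨Σ k, S k, ⟨⟨Classical.arbitrary K, Classical.arbitrary _⟩⟩, E.sigma D,
    OrderEmbedding.ofStrictMono (fun a => Germ.sigmaFlatten E (F a))
      (fun _ _ hab => Germ.sigmaFlatten_lt_sigmaFlatten (hlt _ _ hab)),
    fun t => Germ.sigmaFlatten_eq_const (hfix t)⟩

protected theorem trans {e₁ : I ↪o J} {e₂ : J ↪o L} (h₁ : NicelyEmbedded.{u₁, u₂, w₁} e₁)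
    (h₂ : NicelyEmbedded.{u₂, u₃, w₂} e₂) :
    NicelyEmbedded.{u₁, u₃, max w₂ w₁} (e₁.trans e₂) := by
  obtain ⟨S₁, _, D₁, g₁, hg₁⟩ := h₁
  obtain ⟨S₂, _, D₂, g₂, hg₂⟩ := h₂
  refine of_ultraproduct D₂ (fun _ => D₁) (fun c k => g₁ ((g₂ c).out k))
    (fun a b hab => ?_) (fun t => ?_)
  · filter_upwards [Germ.eventually_out_lt_out (g₂.strictMono hab)] with k hk
    exact g₁.strictMono hk
  · filter_upwards [Germ.eventually_out_eq_of_eq_const (hg₂ (e₁ t))] with k hk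
    simp only [RelEmbedding.coe_trans, Function.comp_apply, hk, hg₁]

end NicelyEmbedded

namespace NicelyEmbeddedSet

variable {T : Type u} [LinearOrder T]

protected theorem refl (A : Set T) : NicelyEmbeddedSet.{u, w} A A :=
  ⟨subset_rfl, PUnit, inferInstance, pure PUnit.unit,
    OrderEmbedding.ofStrictMono (fun t => ↑t) fun _ _ => Germ.const_lt, fun _ => rfl⟩

protected theorem trans {A B C : Set T} (h₁ : NicelyEmbeddedSet.{u, w₁} A B)
    (h₂ : NicelyEmbeddedSet.{u, w₂} B C) : NicelyEmbeddedSet.{u, max w₂ w₁} A C :=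
  ⟨h₁.1.trans h₂.1, h₁.2.trans h₂.2⟩

protected theorem iUnion {K : Type w₁} [Preorder K] [IsDirectedOrder K] [Nonempty K]
    {A : Set T} {B : K → Set T} (hB : Monotone B)
    (h : ∀ k, NicelyEmbeddedSet.{u, w₂} A (B k)) :
    NicelyEmbeddedSet.{u, max w₁ w₂} A (⋃ k, B k) := by
  classical
  choose hAB S hS D g hg using h
  have hA : ∀ t : ↥(⋃ k, B k), Nonempty A := fun t =>
    have ⟨k, hk⟩ := Set.mem_iUnion.mp t.2
    ⟨(g k ⟨t, hk⟩).out (hS k).some⟩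
  let E : Ultrafilter K := .of atTop
  have eventually_mem : ∀ t : ↥(⋃ k, B k), ∀ᶠ k in (E : Filter K), ↑t ∈ B k :=
    fun t =>
      have ⟨k₀, hk₀⟩ := Set.mem_iUnion.mp t.2
      Ultrafilter.of_le _ <| eventually_atTop.mpr ⟨k₀, fun _ hk => hB hk hk₀⟩
  refine ⟨Set.subset_iUnion_of_subset (Classical.arbitrary K) (hAB _),
    NicelyEmbedded.of_ultraproduct E D
      -- the junk branch is irrelevant: `t ∈ B k` for `E`-almost all `k`
      (fun t k => if ht : ↑t ∈ B k then g k ⟨t, ht⟩ else ↑(hA t).some)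
      (fun a b hab => ?_) (fun t => .of_forall fun k => ?_)⟩
  · filter_upwards [eventually_mem a, eventually_mem b] with k ha hb
    have hab' : (⟨a, ha⟩ : B k) < ⟨b, hb⟩ := hab
    simpa only [dif_pos ha, dif_pos hb] using (g k).strictMono hab'
  · exact (dif_pos (hAB k t.2)).trans (hg k t)

end NicelyEmbeddedSet

theorem nicelyEmbeddedSet_of_eq_biUnion {T : Type u} [LinearOrder T] {I : Ordinal.{v} → Set T}
    {α β : Ordinal.{v}} (hαβ : α < β)
    (hmono : ∀ γ γ' : Ordinal.{v}, γ ≤ γ' → γ' ≤ β → I γ ⊆ I γ')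
    (hcont : I β = ⋃ (γ : Ordinal.{v}) (_ : γ < β), I γ)
    (h : ∀ γ, α ≤ γ → γ < β → NicelyEmbeddedSet.{u, w} (I α) (I γ)) :
    NicelyEmbeddedSet.{u, max v w} (I α) (I β) := by
  -- `β.ToType` is a copy of `Set.Iio β` in `Type v`, so the union stays in the right universe
  let ord : β.ToType → Ordinal.{v} := fun x => α ⊔ (Ordinal.ToType.mk.symm x).1
  have ord_lt : ∀ x, ord x < β := fun x => max_lt hαβ (Ordinal.ToType.mk.symm x).2
  have : Nonempty β.ToType := Ordinal.nonempty_toType_iff.mpr hαβ.ne_bot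
  have hunion : ⋃ x, I (ord x) = I β := by
    refine (Set.iUnion_subset fun x => hmono _ _ (ord_lt x).le le_rfl).antisymm ?_
    rw [hcont]
    refine Set.iUnion₂_subset fun γ hγ => ?_
    refine (hmono γ (ord (Ordinal.ToType.mk ⟨γ, hγ⟩)) ?_ (ord_lt _).le).trans
      (Set.subset_iUnion (fun x => I (ord x)) _)
    simp only [ord, OrderIso.symm_apply_apply, le_sup_right]
  rw [← hunion]
  refine NicelyEmbeddedSet.iUnion (fun x y hxy => hmono _ _ ?_ (ord_lt y).le)
    fun x => h _ le_sup_left (ord_lt x)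
  exact sup_le_sup_left (Subtype.mono_coe _ (Ordinal.ToType.mk.symm.monotone hxy)) α

/-- Fact (E) in the proof of Criterion 2.6 (the order-theoretic content of
Observation 1.11): if `⟨I_α : α ≤ δ⟩` is a continuous increasing chain of linear orders
and `I_α` is nicely embedded in `I_{α+1}` for every `α < δ`, then `I_α` is nicely
embedded in `I_δ` for every `α ≤ δ`. -/
theorem nicelyEmbedded_of_chain {T : Type u} [LinearOrder T] (δ : Ordinal.{v})
    (I : Ordinal.{v} → Set T)
    (hmono : ∀ α β : Ordinal.{v}, α ≤ β → β ≤ δ → I α ⊆ I β)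
    (hcont : ∀ β : Ordinal.{v}, β ≤ δ → Order.IsSuccLimit β →
      I β = ⋃ (α : Ordinal.{v}) (_ : α < β), I α)
    (hsucc : ∀ α : Ordinal.{v}, α < δ → NicelyEmbeddedSet.{u, w} (I α) (I (α + 1))) :
    ∀ α : Ordinal.{v}, α ≤ δ → NicelyEmbeddedSet.{u, max v w} (I α) (I δ) := by
  suffices H : ∀ β ≤ δ, ∀ α ≤ β, NicelyEmbeddedSet.{u, max v w} (I α) (I β) from
    H δ le_rfl
  intro β
  induction β using Ordinal.limitRecOn with
  | zero =>
    intro _ α hα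
    rw [nonpos_iff_eq_zero.mp hα]
    exact .refl _
  | add_one β IH =>
    intro hβδ α hα
    have hβ : β < δ := (Order.lt_add_one_iff.mpr le_rfl).trans_le hβδ
    rcases hα.lt_or_eq with hαβ | rfl
    · exact (IH hβ.le α (Order.lt_add_one_iff.mp hαβ)).trans (hsucc β hβ)
    · exact .refl _
  | limit β hlim IH =>
    intro hβδ α hα
    rcases hα.lt_or_eq with hαβ | rfl
    · exact nicelyEmbeddedSet_of_eq_biUnion hαβ
        (fun γ γ' hγ hγ' => hmono γ γ' hγ (hγ'.trans hβδ)) (hcont β hβδ hlim)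
        fun γ hαγ hγβ => IH γ hγβ (hγβ.le.trans hβδ) α hαγ
    · exact .refl _
end

section
/- Suppose I ⊆ J ⊆ K are linear orders (each a suborder of the next), I is nicely embedded in J, and J is nicely embedded in K. Then I is nicely embedded in K. (The order-theoretic content of Observation 1.7.5: composing two ultrapower operations yields an ultrapower operation.) -/
open Filter Cardinal

universe u v w u₁ u₂ u₃

/-- A chosen representative of a germ. -/
noncomputable def germRep {α : Type*} {β : Type*} (l : Filter α) (x : Filter.Germ l β) :
    α → β :=
  Quotient.out (x : Quotient (Filter.germSetoid l β))

/-- Every germ is the germ of its chosen representative. -/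
lemma germ_out_eq {α : Type*} {β : Type*} (l : Filter α) (x : Filter.Germ l β) :
    (↑(germRep l x) : Filter.Germ l β) = x := by
  rw [← Filter.Germ.quot_mk_eq_coe]
  exact Quotient.out_eq x

/-- The order-theoretic content of Observation 1.7.5: being nicely embedded is
transitive — if `I ⊆ J ⊆ K`, `I` is nicely embedded in `J` and `J` is nicely embedded
in `K`, then `I` is nicely embedded in `K`. -/
theorem nicelyEmbedded_trans {I : Type u} {J : Type v} {K : Type w}
    [LinearOrder I] [LinearOrder J] [LinearOrder K]
    (e : I ↪o J) (f : J ↪o K)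
    (he : NicelyEmbedded.{u, v, u₁} e) (hf : NicelyEmbedded.{v, w, u₂} f) :
    NicelyEmbedded.{u, w, max u₁ u₂} (e.trans f) := by
  obtain ⟨S, hS, D, g, hg⟩ := he
  obtain ⟨T, hT, E, h, hh⟩ := hf
  -- the Fubini product ultrafilter on `S × T`
  let U : Ultrafilter (S × T) := E.bind fun t => D.map fun s => (s, t)
  have hU : ∀ P : S × T → Prop, (∀ᶠ p in (U : Filter (S × T)), P p) ↔
      ∀ᶠ t in (E : Filter T), ∀ᶠ s in (D : Filter S), P (s, t) := by
    intro P
    show (∀ᶠ p in Filter.bind (E : Filter T)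
        (fun t => Filter.map (fun s => (s, t)) (D : Filter S)), P p) ↔ _
    rw [Filter.eventually_bind]
    simp [Filter.eventually_map]
  -- the composite map
  let φ : K → Filter.Germ (U : Filter (S × T)) I :=
    fun k => ↑(fun p : S × T => germRep (D : Filter S) (g (germRep (E : Filter T) (h k) p.2)) p.1)
  have hφ : StrictMono φ := by
    intro k₁ k₂ hk
    have h1 : h k₁ < h k₂ := h.strictMono hk
    rw [← germ_out_eq (E : Filter T) (h k₁), ← germ_out_eq (E : Filter T) (h k₂)] at h1
    have h2 : ∀ᶠ t in (E : Filter T),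
        germRep (E : Filter T) (h k₁) t < germRep (E : Filter T) (h k₂) t :=
      Filter.Germ.coe_lt.1 h1
    refine Filter.Germ.coe_lt.2 ((hU _).2 ?_)
    filter_upwards [h2] with t ht
    have h3 : g (germRep (E : Filter T) (h k₁) t) < g (germRep (E : Filter T) (h k₂) t) :=
      g.strictMono ht
    rw [← germ_out_eq (D : Filter S) (g (germRep (E : Filter T) (h k₁) t)),
      ← germ_out_eq (D : Filter S) (g (germRep (E : Filter T) (h k₂) t))] at h3
    exact Filter.Germ.coe_lt.1 h3
  refine ⟨S × T, ⟨(hS.some, hT.some)⟩, U, OrderEmbedding.ofStrictMono φ hφ, ?_⟩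
  intro t
  show φ (f (e t)) = (↑t : Filter.Germ (U : Filter (S × T)) I)
  refine Filter.Germ.coe_eq.2 ((hU _).2 ?_)
  have h1 : (↑(germRep (E : Filter T) (h (f (e t)))) : Filter.Germ (E : Filter T) J)
      = ↑(e t) := by
    rw [germ_out_eq, hh]
  have h2 : germRep (E : Filter T) (h (f (e t))) =ᶠ[(E : Filter T)] fun _ => e t :=
    Filter.Germ.coe_eq.1 h1
  filter_upwards [h2] with t' ht'
  have h3 : (↑(germRep (D : Filter S) (g (germRep (E : Filter T) (h (f (e t))) t')))
      : Filter.Germ (D : Filter S) I) = ↑t := by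
    rw [germ_out_eq, ht', hg]
  have h4 : germRep (D : Filter S) (g (germRep (E : Filter T) (h (f (e t))) t'))
      =ᶠ[(D : Filter S)] fun _ => t := Filter.Germ.coe_eq.1 h3
  filter_upwards [h4] with s hs
  exact hs
end

section
/- (Criterion 2.6.) Let κ be a measurable cardinal and let I be a suborder of the linear order J. Suppose that for every t ∈ J \ I, either the set {s ∈ I : s < t} has a cofinal subset of order type κ (equivalently, cofinality κ, since κ is regular), or the set {s ∈ I : s > t} has a coinitial subset whose reverse order has order type κ. Then I is nicely embedded in J. -/
open Filter Cardinal

universe u v w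

/-- `κ` is a measurable cardinal: it is uncountable and carries a `κ`-complete
nonprincipal ultrafilter on `κ`. -/
def IsMeasurableCardinal (κ : Cardinal.{u}) : Prop :=
  ℵ₀ < κ ∧ ∃ D : Ultrafilter κ.ord.ToType,
    (∀ x, D ≠ pure x) ∧ CardinalInterFilter (D : Filter κ.ord.ToType) κ

/-- The set `{s ∈ A : s < t}` has a cofinal subset of order type `κ`. -/
def HasCofinalKappaChainBelow (κ : Cardinal.{u}) {J : Type v} [LinearOrder J]
    (A : Set J) (t : J) : Prop :=
  ∃ f : κ.ord.ToType → J, StrictMono f ∧ (∀ a, f a ∈ A ∧ f a < t) ∧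
    ∀ s ∈ A, s < t → ∃ a, s ≤ f a

/-- The set `{s ∈ A : t < s}` has a coinitial subset whose reverse order has order
type `κ`. -/
def HasCoinitialKappaChainAbove (κ : Cardinal.{u}) {J : Type v} [LinearOrder J]
    (A : Set J) (t : J) : Prop :=
  ∃ f : κ.ord.ToType → J, StrictAnti f ∧ (∀ a, f a ∈ A ∧ t < f a) ∧
    ∀ s ∈ A, t < s → ∃ a, f a ≤ s

/-! For a finite `F ⊆ J` and a stage `a` below `κ`, send each `t ∉ I` to a term of a fixed
`κ`-sequence in `I` converging to the cut of `t`, at an index that lies past `a` and grows with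
the rank of `t` in `F`. Points of `F` with the same cut share their sequence, so the ranks keep
them in order; points with different cuts are separated by some `s ∈ I`, which the sequences pass
once `a` is large. So for large `a` these maps `J → I` fix `I` and are strictly monotone on `F`,
and along an ultrafilter on the finite subsets of `J` they give the required embedding. -/

open Set Order

theorem nicelyEmbedded_of_forall_finset {I : Type u} {J : Type v} [LinearOrder I]
    [LinearOrder J] {e : I ↪o J}
    (h : ∀ F : Finset J, ∃ r : J → I, (∀ x, r (e x) = x) ∧ StrictMonoOn r F) :
    NicelyEmbedded.{u, v, max w v} e := by
  choose r hre hr using h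
  let D : Ultrafilter (ULift.{w} (Finset J)) := .of (map ULift.up atTop)
  have hD : ∀ t u, ∀ᶠ F in (D : Filter (ULift (Finset J))), t ∈ F.down ∧ u ∈ F.down :=
    fun t u => Ultrafilter.of_le _ <|
      (eventually_ge_atTop {t, u}).mono fun F hF => ⟨hF (by simp), hF (by simp)⟩
  have hmono : StrictMono fun t : J =>
      (Germ.ofFun fun F : ULift (Finset J) => r F.down t : Germ (D : Filter _) I) := by
    intro t u htu
    exact Germ.coe_lt.2 <| (hD t u).mono fun F hF => hr F.down hF.1 hF.2 htu
  exact ⟨ULift (Finset J), inferInstance, D, .ofStrictMono _ hmono,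
    fun x => congrArg Germ.ofFun (funext fun F => hre F.down x)⟩

section Seq

variable {T J : Type*} [Preorder T] [Preorder J]

def IsCofinalSeq (L : Set J) (f : T → J) : Prop :=
  StrictMono f ∧ (∀ a, f a ∈ L) ∧ ∀ s ∈ L, ∃ a, s ≤ f a

def IsCoinitialSeq (U : Set J) (f : T → J) : Prop :=
  StrictAnti f ∧ (∀ a, f a ∈ U) ∧ ∀ s ∈ U, ∃ a, f a ≤ s

variable [NoMaxOrder T] {f : T → J} {s : J}

theorem IsCofinalSeq.eventually_lt {L : Set J} (hf : IsCofinalSeq L f) (hs : s ∈ L) :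
    ∀ᶠ a in atTop, s < f a := by
  obtain ⟨b, hb⟩ := hf.2.2 s hs
  filter_upwards [eventually_gt_atTop b] with a ha using hb.trans_lt (hf.1 ha)

theorem IsCoinitialSeq.eventually_gt {U : Set J} (hf : IsCoinitialSeq U f) (hs : s ∈ U) :
    ∀ᶠ a in atTop, f a < s := by
  obtain ⟨b, hb⟩ := hf.2.2 s hs
  filter_upwards [eventually_gt_atTop b] with a ha using (hf.1 ha).trans_le hb

end Seq

section Cut

variable {J : Type*} [LinearOrder J] {I : Set J} {t u : J}

theorem inter_Iio_eq_of_forall_notMem_Ioo (ht : t ∉ I) (htu : t ≤ u)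
    (h : ∀ s ∈ I, s ∉ Ioo t u) : I ∩ Iio t = I ∩ Iio u := by
  ext s
  refine ⟨fun ⟨hs, hst⟩ => ⟨hs, hst.trans_le htu⟩,
    fun ⟨hs, hsu⟩ => ⟨hs, lt_of_not_ge fun hts => ?_⟩⟩
  exact h s hs ⟨hts.lt_of_ne (ne_of_mem_of_not_mem hs ht).symm, hsu⟩

theorem inter_Ioi_eq_of_inter_Iio_eq (ht : t ∉ I) (hu : u ∉ I)
    (h : I ∩ Iio t = I ∩ Iio u) : I ∩ Ioi t = I ∩ Ioi u := by
  have hcompl : ∀ x ∉ I, I ∩ Ioi x = I \ (I ∩ Iio x) := fun x hx => by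
    ext s
    simp only [mem_inter_iff, Set.mem_sdiff, mem_Ioi, mem_Iio, not_and, not_lt]
    exact ⟨fun ⟨hs, hxs⟩ => ⟨hs, fun _ => hxs.le⟩,
      fun ⟨hs, hxs⟩ => ⟨hs, (hxs hs).lt_of_ne (ne_of_mem_of_not_mem hs hx).symm⟩⟩
  rw [hcompl t ht, hcompl u hu, h]

theorem card_filter_lt_lt_card_filter_lt {F : Finset J} (ht : t ∈ F) (htu : t < u) :
    (F.filter (· < t)).card < (F.filter (· < u)).card := by
  refine Finset.card_lt_card <| (Finset.ssubset_iff_of_subset fun v hv => ?_).2 ⟨t, ?_, ?_⟩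
  · simp only [Finset.mem_filter] at hv ⊢
    exact ⟨hv.1, hv.2.trans htu⟩
  · simp [ht, htu]
  · simp

theorem card_filter_gt_lt_card_filter_gt {F : Finset J} (hu : u ∈ F) (htu : t < u) :
    (F.filter (u < ·)).card < (F.filter (t < ·)).card :=
  card_filter_lt_lt_card_filter_lt (J := Jᵒᵈ) hu htu

end Cut

section CutApprox

variable {T J : Type*} [LinearOrder T] [LinearOrder J]

variable (T) in
def CutsApproachable (I : Set J) : Prop :=
  ∀ t ∉ I, (∃ f : T → J, IsCofinalSeq (I ∩ Iio t) f) ∨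
    ∃ f : T → J, IsCoinitialSeq (I ∩ Ioi t) f

variable [SuccOrder T]

variable (T) in
open Classical in
/-- The decreasing sequence above `t` is read at an index that grows with the number of points
of `F` above `t`, so that it too preserves the order of `F`. -/
noncomputable def cutApprox (I : Set J) (F : Finset J) (a : T) (t : J) : J :=
  if t ∈ I then t
  else if h : ∃ f : T → J, IsCofinalSeq (I ∩ Iio t) f then
    h.choose (succ^[(F.filter (· < t)).card] a)
  else if h : ∃ f : T → J, IsCoinitialSeq (I ∩ Ioi t) f then
    h.choose (succ^[(F.filter (t < ·)).card] a)
  else t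

variable {I : Set J} {F : Finset J} {t u s : J}

theorem cutApprox_of_mem (ht : t ∈ I) (a : T) : cutApprox T I F a t = t := if_pos ht

theorem cutApprox_mem (hI : CutsApproachable T I) (a : T) : cutApprox T I F a t ∈ I := by
  unfold cutApprox
  split_ifs with ht h₁ h₂
  · exact ht
  · exact (h₁.choose_spec.2.1 _).1
  · exact (h₂.choose_spec.2.1 _).1
  · exact absurd ((hI t ht).resolve_left h₁) h₂

variable [NoMaxOrder T]

theorem eventually_lt_cutApprox (hI : CutsApproachable T I) (ht : t ∉ I) (hs : s ∈ I)
    (hst : s < t) : ∀ᶠ a in atTop, s < cutApprox T I F a t := by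
  simp only [cutApprox, if_neg ht]
  split_ifs with h₁ h₂
  · exact (tendsto_atTop_mono (le_succ_iterate _) tendsto_id).eventually
      (h₁.choose_spec.eventually_lt ⟨hs, hst⟩)
  · exact .of_forall fun _ => hst.trans (h₂.choose_spec.2.1 _).2
  · exact absurd ((hI t ht).resolve_left h₁) h₂

theorem eventually_cutApprox_lt (hI : CutsApproachable T I) (ht : t ∉ I) (hs : s ∈ I)
    (hts : t < s) : ∀ᶠ a in atTop, cutApprox T I F a t < s := by
  simp only [cutApprox, if_neg ht]
  split_ifs with h₁ h₂
  · exact .of_forall fun _ => (h₁.choose_spec.2.1 _).2.trans hts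
  · exact (tendsto_atTop_mono (le_succ_iterate _) tendsto_id).eventually
      (h₂.choose_spec.eventually_gt ⟨hs, hts⟩)
  · exact absurd ((hI t ht).resolve_left h₁) h₂

theorem cutApprox_lt_cutApprox_of_inter_Iio_eq (hI : CutsApproachable T I) (htF : t ∈ F)
    (huF : u ∈ F) (ht : t ∉ I) (hu : u ∉ I) (htu : t < u) (hcut : I ∩ Iio t = I ∩ Iio u)
    (a : T) : cutApprox T I F a t < cutApprox T I F a u := by
  have hsucc : StrictMono fun n => succ^[n] a :=
    succ_strictMono.strictMono_iterate_of_lt_map (lt_succ a)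
  simp only [cutApprox, if_neg ht, if_neg hu]
  rw [hcut, inter_Ioi_eq_of_inter_Iio_eq ht hu hcut]
  split_ifs with h₁ h₂
  · exact h₁.choose_spec.1 (hsucc (card_filter_lt_lt_card_filter_lt htF htu))
  · exact h₂.choose_spec.1 (hsucc (card_filter_gt_lt_card_filter_gt huF htu))
  · exact absurd ((hI u hu).resolve_left h₁) h₂

theorem eventually_cutApprox_lt_cutApprox (hI : CutsApproachable T I) (htF : t ∈ F)
    (huF : u ∈ F) (htu : t < u) :
    ∀ᶠ a in atTop, cutApprox T I F a t < cutApprox T I F a u := by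
  by_cases ht : t ∈ I <;> by_cases hu : u ∈ I
  · exact .of_forall fun a => by rwa [cutApprox_of_mem ht, cutApprox_of_mem hu]
  · simpa only [cutApprox_of_mem ht] using eventually_lt_cutApprox hI hu ht htu
  · simpa only [cutApprox_of_mem hu] using eventually_cutApprox_lt hI ht hu htu
  by_cases hsep : ∃ s ∈ I, s ∈ Ioo t u
  · obtain ⟨s, hs, hts, hsu⟩ := hsep
    filter_upwards [eventually_cutApprox_lt hI ht hs hts, eventually_lt_cutApprox hI hu hs hsu]
      with a h₁ h₂ using h₁.trans h₂
  · push Not at hsep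
    exact .of_forall <| cutApprox_lt_cutApprox_of_inter_Iio_eq hI htF huF ht hu htu
      (inter_Iio_eq_of_forall_notMem_Ioo ht htu.le hsep)

theorem exists_strictMonoOn_cutApprox [Nonempty T] (hI : CutsApproachable T I)
    (F : Finset J) : ∃ a : T, StrictMonoOn (cutApprox T I F a) F := by
  have : ∀ᶠ a in atTop, ∀ t ∈ F, ∀ u ∈ F, t < u →
      cutApprox T I F a t < cutApprox T I F a u := by
    simp only [eventually_all_finset, eventually_imp_distrib_left]
    exact fun t ht u hu => eventually_cutApprox_lt_cutApprox hI ht hu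
  exact this.exists

end CutApprox

theorem hasCofinalKappaChainBelow_iff {κ : Cardinal.{u}} {J : Type v} [LinearOrder J]
    {A : Set J} {t : J} :
    HasCofinalKappaChainBelow κ A t ↔
      ∃ f : κ.ord.ToType → J, IsCofinalSeq (A ∩ Iio t) f := by
  simp only [HasCofinalKappaChainBelow, IsCofinalSeq, mem_inter_iff, mem_Iio, and_imp]

theorem hasCoinitialKappaChainAbove_iff {κ : Cardinal.{u}} {J : Type v} [LinearOrder J]
    {A : Set J} {t : J} :
    HasCoinitialKappaChainAbove κ A t ↔
      ∃ f : κ.ord.ToType → J, IsCoinitialSeq (A ∩ Ioi t) f := by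
  simp only [HasCoinitialKappaChainAbove, IsCoinitialSeq, mem_inter_iff, mem_Ioi, and_imp]

/-- Criterion 2.6: let `κ` be a measurable cardinal and `I` a suborder of `J`. If every
`t ∈ J \ I` has, on one of the two sides of the Dedekind cut it defines in `I`, a
cofinal (resp. coinitial) chain of order type `κ` (resp. reversed `κ`), then `I` is
nicely embedded in `J`. -/
theorem nicelyEmbedded_of_criterion (κ : Cardinal.{u})
    (hκ : IsMeasurableCardinal κ) (J : Type v) [LinearOrder J] (I : Set J)
    (hcut : ∀ t : J, t ∉ I →
      HasCofinalKappaChainBelow κ I t ∨ HasCoinitialKappaChainAbove κ I t) :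
    NicelyEmbedded.{v, v, max u v} (OrderEmbedding.subtype (· ∈ I)) := by
  have hκ₀ : ℵ₀ ≤ κ := hκ.1.le
  have : Nonempty κ.ord.ToType :=
    Ordinal.nonempty_toType_iff.2 (isSuccLimit_ord hκ₀).ne_bot
  have : NoMaxOrder κ.ord.ToType := noMaxOrder hκ₀
  have hI : CutsApproachable κ.ord.ToType I := fun t ht => by
    simpa only [hasCofinalKappaChainBelow_iff, hasCoinitialKappaChainAbove_iff] using hcut t ht
  refine nicelyEmbedded_of_forall_finset fun F => ?_
  obtain ⟨a, ha⟩ := exists_strictMonoOn_cutApprox hI F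
  exact ⟨codRestrict (cutApprox _ I F a) I fun _ => cutApprox_mem hI a,
    fun x => Subtype.ext (cutApprox_of_mem x.2 a), fun t ht u hu htu => ha ht hu htu⟩
end

section
/- (The property (*)_λ[I] of Lemma 3.7.) Let λ be an infinite cardinal and let I = ({}^{ω>}λ, <_lex) be the linear order of all finite sequences of ordinals below λ under the lexicographic order. Then I has cardinality λ, and for every cardinal θ with ℵ₀ ≤ θ < λ and every J₀ ⊆ I with |J₀| = θ, there exists J₁ with J₀ ⊆ J₁ ⊆ I and |J₁| = θ such that for every J* ⊆ I of cardinality ≤ θ there is an order-preserving injection from J₀ ∪ J* into J₁ which is the identity on J₀. -/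
/-!
Let `A` be the set of letters of the words in `J₀`. A letter `x ∉ A` is represented by the least
letter `cutMin A x` with the same predecessors in `A` as `x`; in a well-order there are at most
`|A| + 1` such cuts. Together with a further set `S` of `θ` letters this gives an alphabet `C` of
size `θ`, and `J₁` consists of the words over `C`.

Given `J*`, the letters of `J₀ ∪ J*` with a common representative form a well-order of size
`≤ θ`. It embeds into the words over `S` so that distinct letters get words that branch apart
(`BranchLt`): cover it by `θ` initial segments `Iic (f i)`, code these by induction, and prefix
each code by the index `i`. Replacing every letter `y` by `cutRep A y` followed by its code then
preserves `<_lex`, because branching apart survives appending arbitrary tails, and it fixes the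
words of `J₀`.
-/

open Filter Cardinal

universe u

open Set

section Branch

variable {α β : Type*} [LinearOrder α] [LinearOrder β]

def BranchLt (u v : List α) : Prop :=
  ∃ (p u' v' : List α) (a b : α), a < b ∧ u = p ++ a :: u' ∧ v = p ++ b :: v'

theorem branchLt_cons_of_lt {a b : α} (u v : List α) (h : a < b) :
    BranchLt (a :: u) (b :: v) :=
  ⟨[], u, v, a, b, h, rfl, rfl⟩

namespace BranchLt

variable {u v : List α}

theorem cons (c : α) (h : BranchLt u v) : BranchLt (c :: u) (c :: v) := by
  obtain ⟨p, u', v', a, b, hab, rfl, rfl⟩ := h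
  exact ⟨c :: p, u', v', a, b, hab, rfl, rfl⟩

theorem append (h : BranchLt u v) (w w' : List α) : BranchLt (u ++ w) (v ++ w') := by
  obtain ⟨p, u', v', a, b, hab, rfl, rfl⟩ := h
  exact ⟨p, u' ++ w, v' ++ w', a, b, hab, by simp, by simp⟩

theorem lt (h : BranchLt u v) : u < v := by
  obtain ⟨p, u', v', a, b, hab, rfl, rfl⟩ := h
  exact List.Lex.append_left _ (List.Lex.rel hab) p

theorem map {f : α → β} (hf : StrictMono f) (h : BranchLt u v) :
    BranchLt (u.map f) (v.map f) := by
  obtain ⟨p, u', v', a, b, hab, rfl, rfl⟩ := h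
  exact ⟨p.map f, u'.map f, v'.map f, f a, f b, hf hab, by simp, by simp⟩

end BranchLt

theorem branchLt_cons_cons {a b : α} {u v : List α} (hab : a ≤ b) (h : a = b → BranchLt u v) :
    BranchLt (a :: u) (b :: v) := by
  rcases hab.eq_or_lt with rfl | hlt
  · exact (h rfl).cons a
  · exact branchLt_cons_of_lt u v hlt

def BranchStrictMonoOn {W : Type*} [LT W] (e : W → List α) (s : Set W) : Prop :=
  ∀ ⦃x⦄, x ∈ s → ∀ ⦃y⦄, y ∈ s → x < y → BranchLt (e x) (e y)

namespace BranchStrictMonoOn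

variable {W : Type*} [LinearOrder W] {e : W → List α} {s : Set W}

theorem map_list {f : α → β} (he : BranchStrictMonoOn e s) (hf : StrictMono f) :
    BranchStrictMonoOn (fun x => (e x).map f) s :=
  fun _ hx _ hy hxy => (he hx hy hxy).map hf

theorem strictMonoOn_flatMap {g : α → List α} {s : Set α} (hg : BranchStrictMonoOn g s)
    (hne : ∀ x ∈ s, g x ≠ []) :
    StrictMonoOn (fun l : List α => l.flatMap g) {l | ∀ x ∈ l, x ∈ s} := by
  intro l hl l' hl' hlt
  induction hlt with
  | @nil b l' =>
    obtain ⟨c, w, hw⟩ := List.exists_cons_of_ne_nil (hne b (hl' b List.mem_cons_self))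
    simp only [List.flatMap_nil, List.flatMap_cons, hw, List.cons_append]
    exact List.Lex.nil
  | @cons a l l' _ ih =>
    simp only [List.flatMap_cons]
    exact List.Lex.append_left _
      (ih (fun x hx => hl x (List.mem_cons_of_mem a hx))
        (fun x hx => hl' x (List.mem_cons_of_mem a hx))) _
  | @rel a l b l' hab =>
    simp only [List.flatMap_cons]
    exact ((hg (hl a List.mem_cons_self) (hl' b List.mem_cons_self) hab).append _ _).lt

end BranchStrictMonoOn

theorem branchStrictMonoOn_cons {W : Type*} [LinearOrder W] {s : Set W} {h : W → α}
    {t : W → List α} (hh : MonotoneOn h s)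
    (ht : ∀ ⦃x⦄, x ∈ s → ∀ ⦃y⦄, y ∈ s → x < y → h x = h y → BranchLt (t x) (t y)) :
    BranchStrictMonoOn (fun x => h x :: t x) s :=
  fun _ hx _ hy hxy => branchLt_cons_cons (hh hx hy hxy.le) (ht hx hy hxy)

end Branch

section Embedding

theorem BranchStrictMonoOn.ite_lt {K α : Type*} [LinearOrder K] [LinearOrder α] {k₀ k₁ : K}
    (hk : k₀ < k₁) {s : Set α} {y : α} {e : α → List K} (he : BranchStrictMonoOn e (s ∩ Iio y)) :
    BranchStrictMonoOn (fun x => if x < y then k₀ :: e x else [k₁]) (s ∩ Iic y) := by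
  intro x hx x' hx' hxx'
  have hxy : x < y := hxx'.trans_le hx'.2
  rcases hx'.2.lt_or_eq with hx'y | rfl
  · simp only [if_pos hxy, if_pos hx'y]
    exact (he ⟨hx.1, hxy⟩ ⟨hx'.1, hx'y⟩ hxx').cons k₀
  · simp only [if_pos hxy, lt_irrefl, if_false]
    exact branchLt_cons_of_lt _ _ hk

theorem exists_branchStrictMonoOn_of_cover {K α : Type*} [LinearOrder K] [WellFoundedLT K]
    [LinearOrder α] {s : Set α} (f : K → α) (hf : ∀ x ∈ s, ∃ i, x ≤ f i)
    (hE : ∀ i, ∃ e : α → List K, BranchStrictMonoOn e (s ∩ Iic (f i))) :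
    ∃ e : α → List K, BranchStrictMonoOn e s := by
  classical
  rcases isEmpty_or_nonempty K with hK | hK
  · exact ⟨fun _ => [], fun x hx => ((hf x hx).elim fun i _ => isEmptyElim i)⟩
  choose E hE using hE
  let block : α → K := fun x =>
    if h : ∃ i, x ≤ f i then wellFounded_lt.min {i | x ≤ f i} h else Classical.arbitrary K
  have block_eq : ∀ x (hx : x ∈ s), block x = wellFounded_lt.min {i | x ≤ f i} (hf x hx) :=
    fun x hx => dif_pos (hf x hx)
  have le_block : ∀ x ∈ s, x ≤ f (block x) := fun x hx => by
    rw [block_eq x hx]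
    exact wellFounded_lt.min_mem {i | x ≤ f i} (hf x hx)
  have block_mono : MonotoneOn block s := fun x hx y hy hxy => by
    rw [block_eq x hx]
    exact (wellFounded_lt (α := K)).min_le (hxy.trans (le_block y hy))
  refine ⟨fun x => block x :: E (block x) x, branchStrictMonoOn_cons block_mono ?_⟩
  intro x hx y hy hxy hblock
  rw [hblock]
  exact hE _ ⟨hx, hblock ▸ le_block x hx⟩ ⟨hy, le_block y hy⟩ hxy

variable {K α : Type u} [LinearOrder K] [LinearOrder α]

theorem exists_branchStrictMonoOn_of_forall_inter_Iio [Nontrivial K] [WellFoundedLT K]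
    {s : Set α} (hs : #s ≤ #K)
    (h : ∀ y ∈ s, ∃ e : α → List K, BranchStrictMonoOn e (s ∩ Iio y)) :
    ∃ e : α → List K, BranchStrictMonoOn e s := by
  rcases s.eq_empty_or_nonempty with rfl | ⟨x₀, hx₀⟩
  · exact ⟨fun _ => [], fun x hx => hx.elim⟩
  obtain ⟨f, hf⟩ : ∃ f : K → s, Function.Surjective f :=
    Function.exists_surjective_iff.mpr ⟨⟨fun _ => ⟨x₀, hx₀⟩⟩, hs⟩
  obtain ⟨k₀, k₁, hk⟩ := exists_pair_lt K
  refine exists_branchStrictMonoOn_of_cover (fun i => (f i : α))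
    (fun x hx => (hf ⟨x, hx⟩).imp fun i hi => by rw [hi]) fun i => ?_
  obtain ⟨e, he⟩ := h (f i) (f i).2
  exact ⟨_, he.ite_lt hk⟩

theorem exists_branchStrictMonoOn [Nontrivial K] [WellFoundedLT K] [WellFoundedLT α]
    {s : Set α} (hs : #s ≤ #K) : ∃ e : α → List K, BranchStrictMonoOn e s := by
  have initial : ∀ y, ∃ e : α → List K, BranchStrictMonoOn e (s ∩ Iio y) := by
    intro y
    induction y using WellFoundedLT.induction with
    | _ y ih =>
      refine exists_branchStrictMonoOn_of_forall_inter_Iio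
        ((mk_le_mk_of_subset inter_subset_left).trans hs) fun z hz => ?_
      rw [inter_assoc, Iio_inter_Iio, min_eq_right hz.2.le]
      exact ih z hz.2
  exact exists_branchStrictMonoOn_of_forall_inter_Iio hs fun y _ => initial y

end Embedding

section Cut

variable {α : Type*} [LinearOrder α] [WellFoundedLT α]

theorem mk_le_mk_add_one_of_exists_mem_Ico {A R : Set α}
    (h : ∀ x ∈ R, ∀ y ∈ R, x < y → ∃ a ∈ A, x ≤ a ∧ a < y) : #R ≤ #A + 1 := by
  classical
  let next : R → Option A := fun x =>
    if hx : (A ∩ Ici x.1).Nonempty then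
      some ⟨wellFounded_lt.min _ hx, (wellFounded_lt.min_mem _ hx).1⟩
    else none
  refine (mk_le_of_injective (f := next) (Function.Injective.of_lt_imp_ne ?_)).trans mk_option.le
  intro x y hxy
  obtain ⟨a, ha, hxa, hay⟩ := h x x.2 y y.2 hxy
  have hx : (A ∩ Ici x.1).Nonempty := ⟨a, ha, hxa⟩
  simp only [next, dif_pos hx]
  split_ifs with hy
  · intro heq
    have hmin : wellFounded_lt.min _ hx = wellFounded_lt.min _ hy :=
      congrArg Subtype.val (Option.some_injective _ heq)
    have h₁ : wellFounded_lt.min _ hx ≤ a :=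
      (wellFounded_lt (α := α)).min_le (show a ∈ A ∩ Ici x.1 from ⟨ha, hxa⟩)
    have h₂ : y.1 ≤ wellFounded_lt.min _ hy := (wellFounded_lt.min_mem _ hy).2
    exact (h₁.trans_lt (hay.trans_le (hmin ▸ h₂))).false
  · exact Option.some_ne_none _

variable (A : Set α)

noncomputable def cutMin (x : α) : α :=
  wellFounded_lt.min {γ | A ∩ Iio γ = A ∩ Iio x} ⟨x, rfl⟩

variable {A} {x y a : α}

theorem inter_Iio_cutMin : A ∩ Iio (cutMin A x) = A ∩ Iio x :=
  (wellFounded_lt (α := α)).min_mem {γ | A ∩ Iio γ = A ∩ Iio x} _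

theorem cutMin_le : cutMin A x ≤ x :=
  (wellFounded_lt (α := α)).min_le (rfl : A ∩ Iio x = A ∩ Iio x)

theorem lt_cutMin_iff (ha : a ∈ A) : a < cutMin A x ↔ a < x := by
  simpa [ha] using Set.ext_iff.mp (inter_Iio_cutMin (A := A) (x := x)) a

theorem cutMin_eq_of_inter_Iio_eq (h : A ∩ Iio x = A ∩ Iio y) : cutMin A x = cutMin A y := by
  simp only [cutMin, h]

theorem cutMin_cutMin : cutMin A (cutMin A x) = cutMin A x :=
  cutMin_eq_of_inter_Iio_eq inter_Iio_cutMin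

theorem cutMin_notMem (hx : x ∉ A) : cutMin A x ∉ A := fun hA =>
  have hlt : cutMin A x < x := cutMin_le.lt_of_ne fun h => hx (h ▸ hA)
  lt_irrefl _ ((lt_cutMin_iff hA).mpr hlt)

theorem cutMin_eq_or_exists_mem_Ico (hxy : x ≤ y) :
    cutMin A x = cutMin A y ∨ ∃ a ∈ A, x ≤ a ∧ a < y := by
  refine or_iff_not_imp_right.mpr fun h => cutMin_eq_of_inter_Iio_eq ?_
  ext a
  refine and_congr_right fun ha => ⟨fun hax => hax.trans_le hxy, fun hay => ?_⟩
  by_contra hax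
  exact h ⟨a, ha, not_lt.mp hax, hay⟩

theorem monotone_cutMin : Monotone (cutMin A) := fun x y hxy => by
  rcases cutMin_eq_or_exists_mem_Ico (A := A) hxy with h | ⟨a, ha, hxa, hay⟩
  · exact h.le
  · exact (cutMin_le.trans hxa).trans ((lt_cutMin_iff ha).mpr hay).le

theorem mk_range_cutMin_le : #(range (cutMin A)) ≤ #A + 1 := by
  refine mk_le_mk_add_one_of_exists_mem_Ico ?_
  rintro _ ⟨x, rfl⟩ _ ⟨y, rfl⟩ hxy
  refine (cutMin_eq_or_exists_mem_Ico hxy.le).resolve_left fun h => hxy.ne ?_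
  rwa [cutMin_cutMin, cutMin_cutMin] at h

variable (A) in
open Classical in
noncomputable def cutRep (x : α) : α :=
  if x ∈ A then x else cutMin A x

theorem cutRep_of_mem (h : x ∈ A) : cutRep A x = x := if_pos h

theorem cutRep_of_notMem (h : x ∉ A) : cutRep A x = cutMin A x := if_neg h

theorem cutRep_mem_iff : cutRep A x ∈ A ↔ x ∈ A := by
  by_cases hx : x ∈ A
  · simp [cutRep_of_mem hx, hx]
  · simp [cutRep_of_notMem hx, hx, cutMin_notMem hx]

theorem notMem_of_cutRep_eq (hxy : x ≠ y) (h : cutRep A x = cutRep A y) : x ∉ A := fun hx =>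
  have hy : y ∈ A := cutRep_mem_iff.mp (h ▸ cutRep_mem_iff.mpr hx)
  hxy (by rwa [cutRep_of_mem hx, cutRep_of_mem hy] at h)

theorem monotone_cutRep : Monotone (cutRep A) := by
  intro x y hxy
  by_cases hx : x ∈ A <;> by_cases hy : y ∈ A
  · simpa [cutRep_of_mem hx, cutRep_of_mem hy]
  · rw [cutRep_of_mem hx, cutRep_of_notMem hy]
    exact ((lt_cutMin_iff hx).mpr (hxy.lt_of_ne fun h => hy (h ▸ hx))).le
  · rw [cutRep_of_notMem hx, cutRep_of_mem hy]
    exact cutMin_le.trans hxy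
  · rw [cutRep_of_notMem hx, cutRep_of_notMem hy]
    exact monotone_cutMin hxy

theorem range_cutRep_subset : range (cutRep A) ⊆ A ∪ range (cutMin A) := by
  rintro _ ⟨x, rfl⟩
  by_cases hx : x ∈ A
  · exact Or.inl (by rwa [cutRep_of_mem hx])
  · exact Or.inr ⟨x, (cutRep_of_notMem hx).symm⟩

theorem mk_range_cutRep_le {θ : Cardinal} (hθ : ℵ₀ ≤ θ) (hA : #A ≤ θ) :
    #(range (cutRep A)) ≤ θ :=
  calc #(range (cutRep A)) ≤ #A + (#A + 1) :=
        (mk_le_mk_of_subset range_cutRep_subset).trans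
          ((mk_union_le _ _).trans (add_le_add_right mk_range_cutMin_le _))
    _ ≤ θ + (θ + θ) := add_le_add hA (add_le_add hA (one_le_aleph0.trans hθ))
    _ = θ := by rw [add_eq_self hθ, add_eq_self hθ]

end Cut

section Letters

variable {α : Type*}

def letters (J : Set (List α)) : Set α := {x | ∃ l ∈ J, x ∈ l}

theorem mk_letters_le {θ : Cardinal} (hθ : ℵ₀ ≤ θ) {J : Set (List α)} (hJ : #J ≤ θ) :
    #(letters J) ≤ θ := by
  have : letters J = ⋃ l ∈ J, {x | x ∈ l} := by ext; simp [letters]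
  rw [this]
  calc _ ≤ #J * ⨆ l : J, #{x | x ∈ l.1} := mk_biUnion_le _ _
    _ ≤ θ * ℵ₀ := mul_le_mul' hJ (ciSup_le' fun l => l.1.finite_toSet.lt_aleph0.le)
    _ = θ := mul_aleph0_eq hθ

theorem mk_setOf_forall_mem (C : Set α) [Infinite C] : #{l : List α | ∀ x ∈ l, x ∈ C} = #C := by
  rw [← range_list_map_coe, mk_range_eq _ (List.map_injective_iff.mpr Subtype.val_injective),
    mk_list_eq_mk]

end Letters

theorem exists_branchStrictMonoOn_eq_singleton {α : Type u} [LinearOrder α] [WellFoundedLT α]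
    (A : Set α) {B S : Set α} [Nontrivial S] (hB : #B ≤ #S) :
    ∃ g : α → List α, BranchStrictMonoOn g B ∧ (∀ y, g y ≠ []) ∧ (∀ a ∈ A, g a = [a]) ∧
      ∀ y, ∀ x ∈ g y, x ∈ range (cutRep A) ∪ S := by
  classical
  choose E hE using fun ρ => exists_branchStrictMonoOn (K := S) (s := {y ∈ B | cutRep A y = ρ})
    ((mk_le_mk_of_subset (sep_subset _ _)).trans hB)
  refine ⟨fun y => cutRep A y :: if y ∈ A then [] else (E (cutRep A y) y).map Subtype.val,
    branchStrictMonoOn_cons (monotone_cutRep.monotoneOn _) ?_, fun y => List.cons_ne_nil _ _,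
    fun a ha => by simp [ha, cutRep_of_mem ha], fun y x hx => ?_⟩
  · intro x hx y hy hxy hρ
    simp only [if_neg (notMem_of_cutRep_eq hxy.ne hρ), if_neg (notMem_of_cutRep_eq hxy.ne' hρ.symm)]
    rw [hρ]
    exact (hE _).map_list (Subtype.strictMono_coe _) ⟨hx, hρ⟩ ⟨hy, rfl⟩ hxy
  · rcases List.mem_cons.mp hx with rfl | hx
    · exact Or.inl ⟨y, rfl⟩
    · split_ifs at hx with hy
      · simp at hx
      · obtain ⟨z, -, rfl⟩ := List.mem_map.mp hx
        exact Or.inr z.2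

/-- The property `(*)_λ[I]` of Lemma 3.7 for the lexicographically ordered tree
`I = (^{ω>}λ, <_lex)` of finite sequences of ordinals below `λ`: `I` has cardinality
`λ`, and for every infinite `θ < λ` and every `J₀ ⊆ I` of cardinality `θ` there is
`J₁ ⊇ J₀` of cardinality `θ` such that every `J* ⊆ I` of cardinality `≤ θ` admits an
order-preserving injection of `J₀ ∪ J*` into `J₁` which is the identity on `J₀`. -/
theorem lex_tree_star_property (lam : Cardinal.{u}) (hlam : ℵ₀ ≤ lam) :
    Cardinal.mk (List lam.ord.ToType) = lam ∧
    ∀ θ : Cardinal.{u}, ℵ₀ ≤ θ → θ < lam →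
      ∀ J₀ : Set (List lam.ord.ToType), Cardinal.mk J₀ = θ →
        ∃ J₁ : Set (List lam.ord.ToType), J₀ ⊆ J₁ ∧ Cardinal.mk J₁ = θ ∧
          ∀ Js : Set (List lam.ord.ToType), Cardinal.mk Js ≤ θ →
            ∃ f : ↥(J₀ ∪ Js) → ↥J₁, StrictMono f ∧
              ∀ (x : List lam.ord.ToType) (hx : x ∈ J₀),
                ↑(f ⟨x, Set.mem_union_left Js hx⟩) = x := by
  have hα : #lam.ord.ToType = lam := by rw [mk_toType, card_ord]
  have : Infinite lam.ord.ToType := infinite_iff.mpr (by rwa [hα])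
  refine ⟨(mk_list_eq_mk _).trans hα, fun θ hθ hθlam J₀ hJ₀ => ?_⟩
  obtain ⟨S, hS⟩ := le_mk_iff_exists_set.mp (hα ▸ hθlam.le)
  have : Infinite S := infinite_iff.mpr (hS ▸ hθ)
  set A := letters J₀
  set C := range (cutRep A) ∪ S
  have hC : #C = θ := le_antisymm
    ((mk_union_le _ _).trans ((add_le_add (mk_range_cutRep_le hθ (mk_letters_le hθ hJ₀.le))
      hS.le).trans (add_eq_self hθ).le))
    (hS ▸ mk_le_mk_of_subset subset_union_right)
  have : Infinite C := infinite_iff.mpr (hC ▸ hθ)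
  refine ⟨{l | ∀ x ∈ l, x ∈ C}, fun l hl x hx => Or.inl ⟨x, cutRep_of_mem ⟨l, hl, hx⟩⟩,
    (mk_setOf_forall_mem C).trans hC, fun Js hJs => ?_⟩
  have hB : #(letters (J₀ ∪ Js)) ≤ #S := hS ▸ mk_letters_le hθ
    ((mk_union_le _ _).trans ((add_le_add hJ₀.le hJs).trans (add_eq_self hθ).le))
  obtain ⟨g, hg, hne, hgA, hgC⟩ := exists_branchStrictMonoOn_eq_singleton A hB
  have hmem : ∀ l : ↥(J₀ ∪ Js), ∀ x ∈ l.1, x ∈ letters (J₀ ∪ Js) := fun l x hx => ⟨l, l.2, hx⟩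
  refine ⟨fun l => ⟨l.1.flatMap g, fun x hx => ?_⟩,
    fun l l' h => hg.strictMonoOn_flatMap (fun y _ => hne y) (hmem l) (hmem l') h, fun l hl => ?_⟩
  · obtain ⟨y, -, hxy⟩ := List.mem_flatMap.mp hx
    exact hgC y x hxy
  · change l.flatMap g = l
    rw [List.flatMap_congr fun x hx => hgA x ⟨l, hl, hx⟩, List.flatMap_singleton']
end

section
/- For all infinite cardinals θ < λ, there exist a linear order I of cardinality λ and a subset J ⊆ I of cardinality θ such that for every J' ⊆ I with |J'| ≤ θ there is an order-preserving injection from J' into J. (The order-theoretic claim used in the proof of Corollary 3.11.) -/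
open Cardinal

universe u

/-!
Take `I = λ ×ₗ List θ` (lists ordered lexicographically) and `J = {a₀} ×ₗ List θ ≅ List θ`.
A set `J' ⊆ I` of size `≤ θ` lies in `D ×ₗ List θ` with `D` its projection, so it suffices to
embed `D ×ₗ List θ` into `List θ` for every `D` of size `≤ θ` in a well order. For `D`, and by
induction on `b` for `D ∩ Iic b`, cover the set by `θ` initial segments `D ∩ Iic (s t)` (with
`s t < b` in the inductive case), each already embedded, and prefix the image of `(x, l)` with the
least `t` whose segment contains `x`; in the inductive case `b` itself gets a larger leading letter.
-/

section LexEmbedding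

variable {A W : Type u} [LinearOrder A] [LinearOrder W]

theorem exists_monotoneOn_le_apply [WellFoundedLT A] [Nonempty A] (s : A → W) (D : Set W)
    (hs : ∀ x ∈ D, ∃ t, x ≤ s t) :
    ∃ idx : W → A, MonotoneOn idx D ∧ ∀ x ∈ D, x ≤ s (idx x) := by
  classical
  let idx : W → A := fun x =>
    if h : ∃ t, x ≤ s t then wellFounded_lt.min {t | x ≤ s t} h else Classical.arbitrary A
  have idx_spec : ∀ x ∈ D, x ≤ s (idx x) := fun x hx => by
    simp only [idx, dif_pos (hs x hx)]
    exact wellFounded_lt.min_mem {t | x ≤ s t} (hs x hx)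
  refine ⟨idx, fun x hx y hy hxy => ?_, idx_spec⟩
  simp only [idx, dif_pos (hs x hx), dif_pos (hs y hy)]
  exact wellFounded_lt.min_le (s := {t | x ≤ s t})
    (hxy.trans (wellFounded_lt.min_mem {t | y ≤ s t} (hs y hy)))

theorem exists_strictMonoOn_lex_of_forall_Iic [WellFoundedLT A] (D : Set W) (hD : #D ≤ #A)
    (hF : ∀ c ∈ D, ∃ F : W ×ₗ List A → List A,
      StrictMonoOn F {p | (ofLex p).1 ∈ D ∧ (ofLex p).1 ≤ c}) :
    ∃ F : W ×ₗ List A → List A, StrictMonoOn F {p | (ofLex p).1 ∈ D} := by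
  rcases D.eq_empty_or_nonempty with rfl | ⟨x₀, hx₀⟩
  · exact ⟨fun _ => [], fun p hp => hp.elim⟩
  obtain ⟨s, hs⟩ : ∃ s : A → D, Function.Surjective s :=
    Function.exists_surjective_iff.mpr ⟨⟨fun _ => ⟨x₀, hx₀⟩⟩, hD⟩
  have : Nonempty A := ⟨(hs ⟨x₀, hx₀⟩).choose⟩
  obtain ⟨idx, idx_mono, le_idx⟩ := exists_monotoneOn_le_apply (fun t => (s t).1) D
    fun x hx => ⟨(hs ⟨x, hx⟩).choose, by rw [(hs ⟨x, hx⟩).choose_spec]⟩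
  choose G hG using hF
  refine ⟨fun p => idx (ofLex p).1 :: G (s (idx (ofLex p).1)) (s _).2 p, ?_⟩
  intro p hp q hq hpq
  have hfst : (ofLex p).1 ≤ (ofLex q).1 := Prod.Lex.monotone_fst _ _ hpq.le
  rcases (idx_mono hp hq hfst).lt_or_eq with hlt | heq
  · exact List.Lex.rel hlt
  · simp only [heq]
    exact List.Lex.cons <| hG _ _ ⟨hp, hfst.trans (heq ▸ le_idx _ hq)⟩ ⟨hq, le_idx _ hq⟩ hpq

theorem exists_strictMonoOn_lex_Iic [WellFoundedLT A] [Nontrivial A] [WellFoundedLT W]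
    (D : Set W) (hD : #D ≤ #A) (b : W) :
    ∃ F : W ×ₗ List A → List A, StrictMonoOn F {p | (ofLex p).1 ∈ D ∧ (ofLex p).1 ≤ b} := by
  induction b using WellFoundedLT.induction with
  | _ b IH =>
  obtain ⟨F, hF⟩ := exists_strictMonoOn_lex_of_forall_Iic (D ∩ Set.Iio b)
    ((mk_le_mk_of_subset Set.inter_subset_left).trans hD) fun c hc =>
      (IH c hc.2).imp fun _ hF => hF.mono fun _ hp => ⟨hp.1.1, hp.2⟩
  obtain ⟨a₀, a₁, ha⟩ := exists_pair_lt A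
  refine ⟨fun p => if (ofLex p).1 < b then a₀ :: F p else a₁ :: (ofLex p).2, ?_⟩
  rintro p ⟨hpD, hpb⟩ q ⟨hqD, hqb⟩ hpq
  have hfst : (ofLex p).1 ≤ (ofLex q).1 := Prod.Lex.monotone_fst _ _ hpq.le
  by_cases hq : (ofLex q).1 < b
  · have hp : (ofLex p).1 < b := hfst.trans_lt hq
    simp only [if_pos hp, if_pos hq]
    exact List.Lex.cons (hF ⟨hpD, hp⟩ ⟨hqD, hq⟩ hpq)
  by_cases hp : (ofLex p).1 < b
  · simp only [if_pos hp, if_neg hq]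
    exact List.Lex.rel ha
  · simp only [if_neg hp, if_neg hq]
    have hpq_fst : (ofLex p).1 = (ofLex q).1 := hfst.antisymm (hqb.trans (not_lt.mp hp))
    exact List.Lex.cons ((Prod.Lex.lt_iff.mp hpq).resolve_left hpq_fst.not_lt).2

theorem exists_strictMonoOn_lex [WellFoundedLT A] [Nontrivial A] [WellFoundedLT W]
    (D : Set W) (hD : #D ≤ #A) :
    ∃ F : W ×ₗ List A → List A, StrictMonoOn F {p | (ofLex p).1 ∈ D} :=
  exists_strictMonoOn_lex_of_forall_Iic D hD fun c _ => exists_strictMonoOn_lex_Iic D hD c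

end LexEmbedding

/-- The order-theoretic claim used in the proof of Corollary 3.11: for all infinite
cardinals `θ < λ` there are a linear order `I` of cardinality `λ` and a subset
`J ⊆ I` of cardinality `θ` such that every `J' ⊆ I` of cardinality `≤ θ` admits an
order-preserving injection into `J`. -/
theorem exists_universal_suborder (θ lam : Cardinal.{u}) (hθ : ℵ₀ ≤ θ)
    (hlt : θ < lam) :
    ∃ (I : LinOrd.{u}) (J : Set I),
      Cardinal.mk I = lam ∧ Cardinal.mk J = θ ∧
      ∀ J' : Set I, Cardinal.mk J' ≤ θ → ∃ f : ↥J' → ↥J, StrictMono f := by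
  have : Infinite θ.ord.ToType := by rwa [infinite_iff, mk_toType, card_ord]
  have : Nonempty lam.ord.ToType := by
    rw [← mk_ne_zero_iff, mk_toType, card_ord]
    exact (aleph0_pos.trans_le (hθ.trans hlt.le)).ne'
  obtain ⟨a₀⟩ := this
  let embed : List θ.ord.ToType → lam.ord.ToType ×ₗ List θ.ord.ToType := fun l => toLex (a₀, l)
  have embed_strictMono : StrictMono embed := fun _ _ h =>
    Prod.Lex.toLex_lt_toLex.mpr (.inr ⟨rfl, h⟩)
  refine ⟨LinOrd.of (lam.ord.ToType ×ₗ List θ.ord.ToType), Set.range embed, ?_, ?_, ?_⟩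
  · change #(lam.ord.ToType × List θ.ord.ToType) = lam
    rw [mk_prod, lift_id, lift_id, mk_list_eq_mk, mk_toType, mk_toType, card_ord, card_ord,
      mul_eq_left (hθ.trans hlt.le) hlt.le (aleph0_pos.trans_le hθ).ne']
  · rw [mk_range_eq _ embed_strictMono.injective, mk_list_eq_mk, mk_toType, card_ord]
  · intro J' hJ'
    obtain ⟨F, hF⟩ := exists_strictMonoOn_lex (A := θ.ord.ToType)
      ((fun p => (ofLex p).1) '' J') (mk_image_le.trans (by rwa [mk_toType, card_ord]))
    exact ⟨fun x => ⟨embed (F x), Set.mem_range_self _⟩, fun x y hxy =>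
      embed_strictMono (hF (Set.mem_image_of_mem _ x.2) (Set.mem_image_of_mem _ y.2) hxy)⟩
end

section
/- Let λ be an infinite cardinal, let θ be an infinite cardinal, let A ⊆ λ with |A| = θ, and let J₀ = {}^{ω>}A be the set of finite sequences with all entries in A, regarded as a subset of the lexicographically ordered set I = ({}^{ω>}λ, <_lex). Define an equivalence relation E on I \ J₀ by: η E ν iff for every ρ ∈ J₀, ρ <_lex η ⟺ ρ <_lex ν (i.e., η and ν define the same Dedekind cut of J₀). Then E has at most θ equivalence classes. (A claim established in the proof of Lemma 3.7.) -/
/-!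
A sequence `η` outside `J₀ = ^{ω>}A` splits as `η = u ++ c :: w` with `u ∈ J₀` and `c ∉ A` its
first entry outside `A`. Since `c ∉ A`, whether a sequence `ρ ∈ J₀` lies below `η` is decided
by `u` and by the cut that `c` makes in `A`; as `λ` is well ordered, that cut is determined by
the least element of `A` above `c`, if there is one. So `η ↦ (u, least element of A above c)`
refines `E`, and it takes values in `List A × Option A`, a set of size `θ`.
-/

open Cardinal

universe u

lemma exists_eq_map_append_cons_of_not_forall_mem {α : Type*} {A : Set α} {l : List α}
    (h : ¬ ∀ x ∈ l, x ∈ A) :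
    ∃ (u : List A) (c : α) (w : List α), c ∉ A ∧ l = u.map (↑) ++ c :: w := by
  induction l with
  | nil => simp at h
  | cons x t ih =>
    by_cases hx : x ∈ A
    · obtain ⟨u, c, w, hc, rfl⟩ := ih (by simpa [hx] using h)
      exact ⟨⟨x, hx⟩ :: u, c, w, hc, rfl⟩
    · exact ⟨[], x, t, hx, rfl⟩

lemma lt_append_cons_iff_of_cut_eq {α : Type*} [LinearOrder α] {A : Set α} {c c' : α}
    (hc : c ∉ A) (hc' : c' ∉ A) (hcut : ∀ a ∈ A, a < c ↔ a < c') (u : List α) {ρ : List α} (hρ : ∀ x ∈ ρ, x ∈ A)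
    (w w' : List α) : ρ < u ++ c :: w ↔ ρ < u ++ c' :: w' := by
  induction u generalizing ρ with
  | nil =>
    cases ρ with
    | nil => exact iff_of_true (List.nil_lt_cons _ _) (List.nil_lt_cons _ _)
    | cons a ρ =>
      have ha : a ∈ A := hρ a List.mem_cons_self
      have hac : a ≠ c := ne_of_mem_of_not_mem ha hc
      have hac' : a ≠ c' := ne_of_mem_of_not_mem ha hc'
      simp only [List.nil_append, List.cons_lt_cons_iff, hac, hac', false_and, or_false]
      exact hcut a ha
  | cons x t ih =>
    cases ρ with
    | nil => exact iff_of_true (List.nil_lt_cons _ _) (List.nil_lt_cons _ _)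
    | cons a ρ =>
      simp only [List.cons_append, List.cons_lt_cons_iff]
      rw [ih fun y hy => hρ y (List.mem_cons_of_mem a hy)]

section LeastAbove

variable {α : Type*} [LinearOrder α] [WellFoundedLT α] (A : Set α)

open Classical in
noncomputable def leastAbove (c : α) : Option A :=
  if h : {a ∈ A | c < a}.Nonempty then
    some ⟨wellFounded_lt.min {a ∈ A | c < a} h, (wellFounded_lt.min_mem {a ∈ A | c < a} h).1⟩
  else none

variable {A}

lemma lt_iff_forall_mem_leastAbove {c a : α} (hc : c ∉ A) (ha : a ∈ A) :
    a < c ↔ ∀ m ∈ leastAbove A c, a < m := by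
  have hac : a ≠ c := ne_of_mem_of_not_mem ha hc
  unfold leastAbove
  split_ifs with hne
  · have hmin := wellFounded_lt.min_mem {a ∈ A | c < a} hne
    simp only [Option.mem_def, Option.some.injEq, forall_eq']
    refine ⟨fun h => h.trans hmin.2, fun h => ?_⟩
    by_contra hca
    exact wellFounded_lt.not_lt_min {a ∈ A | c < a} ⟨ha, lt_of_le_of_ne (not_lt.1 hca) hac.symm⟩ h
  · simp only [reduceCtorEq, Option.mem_def, false_imp_iff, imp_true_iff, iff_true]
    exact (lt_or_gt_of_ne hac).resolve_right fun hca => hne ⟨a, ha, hca⟩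

end LeastAbove

lemma Cardinal.mk_quot_le_of_eq_imp {α β : Type u} {r : α → α → Prop} (f : α → β)
    (hf : ∀ x y, f x = f y → r x y) : #(Quot r) ≤ #β := by
  let g : Set.range f → Quot r := fun b => Quot.mk r b.2.choose
  have hg : Function.Surjective g := by
    refine Quot.ind fun x => ⟨⟨f x, x, rfl⟩, Quot.sound (hf _ _ ?_)⟩
    exact (⟨f x, x, rfl⟩ : Set.range f).2.choose_spec
  exact (mk_le_of_surjective hg).trans (mk_set_le _)

theorem dedekind_cut_classes_le_general (lam θ : Cardinal.{u})
    (hθ : ℵ₀ ≤ θ) (A : Set lam.ord.ToType) (hA : Cardinal.mk A = θ) :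
    Cardinal.mk
      (Quot (fun η ν : {l : List lam.ord.ToType // ¬ ∀ x ∈ l, x ∈ A} =>
        ∀ ρ : List lam.ord.ToType, (∀ x ∈ ρ, x ∈ A) →
          (ρ < η.1 ↔ ρ < ν.1))) ≤ θ := by
  choose u c w hc hsplit using fun η : {l : List lam.ord.ToType // ¬ ∀ x ∈ l, x ∈ A} =>
    exists_eq_map_append_cons_of_not_forall_mem η.2
  refine (mk_quot_le_of_eq_imp (fun η => (u η, leastAbove A (c η))) ?_).trans ?_
  · intro η ν heq ρ hρ
    obtain ⟨hu, hleast⟩ := Prod.mk.inj heq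
    rw [hsplit η, hsplit ν, hu]
    refine lt_append_cons_iff_of_cut_eq (hc η) (hc ν) (fun a ha => ?_) _ hρ _ _
    rw [lt_iff_forall_mem_leastAbove (hc η) ha, lt_iff_forall_mem_leastAbove (hc ν) ha, hleast]
  · have : Infinite A := Cardinal.infinite_iff.2 (hA ▸ hθ)
    rw [mk_prod, lift_id, lift_id, mk_list_eq_mk, mk_option, hA, add_one_eq hθ, mul_eq_self hθ]

/-- A claim established in the proof of Lemma 3.7: let `A ⊆ λ` with `|A| = θ`, let
`J₀ = ^{ω>}A` be the set of finite sequences with entries in `A` inside the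
lexicographically ordered tree `I = (^{ω>}λ, <_lex)`, and let `E` be the equivalence
relation on `I \ J₀` identifying sequences that define the same Dedekind cut of `J₀`.
Then `E` has at most `θ` equivalence classes. -/
theorem dedekind_cut_classes_le (lam θ : Cardinal.{u}) (hlam : ℵ₀ ≤ lam)
    (hθ : ℵ₀ ≤ θ) (A : Set lam.ord.ToType) (hA : Cardinal.mk A = θ) :
    Cardinal.mk
      (Quot (fun η ν : {l : List lam.ord.ToType // ¬ ∀ x ∈ l, x ∈ A} =>
        ∀ ρ : List lam.ord.ToType, (∀ x ∈ ρ, x ∈ A) →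
          (ρ < η.1 ↔ ρ < ν.1))) ≤ θ :=
  dedekind_cut_classes_le_general lam θ hθ A hA
end
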